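/- arXiv:2301.01591 — 3 statements merged into one kernel-verified Lean document; each statement's English description precedes it below -/
import Mathlib

section
/- Let α ∈ (0,1) and r = √(1−α²). For every real x > r, (1/π) · ∫_{−r}^{r} (1/(x−y)) · arccos( α/√(1−y²) ) dy = log(1+x) − log( α + √(x²−r²) ). -/
open MeasureTheory Filter Set intervalIntegral Real


lemma sqrt_sing_integrable {c : ℝ} (hc : 0 < c) :
    IntervalIntegrable (fun y => (Real.sqrt (c^2 - y^2))⁻¹) volume (-c) c := by
  have hmeas : ∀ a b : ℝ, AEStronglyMeasurable (fun y => (Real.sqrt (c^2 - y^2))⁻¹)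
      (volume.restrict (Set.uIoc a b)) := by
    intro a b
    exact ((continuous_const.sub (continuous_pow 2)).sqrt.measurable.inv).aestronglyMeasurable
  have key : ∀ a b : ℝ, IntervalIntegrable (fun y => ((c - y) ^ (-(1/2) : ℝ))) volume a b := by
    intro a b
    have := (intervalIntegrable_rpow' (a := c - a) (b := c - b)
      (r := (-(1/2):ℝ)) (by norm_num)).comp_sub_left c
    simpa using this
  have half : IntervalIntegrable (fun y => (Real.sqrt (c^2 - y^2))⁻¹) volume 0 c := by
    apply IntervalIntegrable.mono_fun (((key 0 c).const_mul ((Real.sqrt c)⁻¹))) (hmeas 0 c)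
    rw [Filter.EventuallyLE, ae_restrict_iff' measurableSet_uIoc]
    filter_upwards with y hy
    rw [Set.uIoc_of_le hc.le] at hy
    obtain ⟨hy0, hyc⟩ := hy
    have hrpow : (c - y) ^ (-(1/2) : ℝ) = (Real.sqrt (c - y))⁻¹ := by
      rw [Real.rpow_neg (by linarith), ← Real.sqrt_eq_rpow]
    simp only [Real.norm_eq_abs]
    rw [abs_of_nonneg (by positivity),
      abs_of_nonneg (mul_nonneg (by positivity) (Real.rpow_nonneg (by linarith) _)), hrpow]
    rcases eq_or_lt_of_le hyc with h | h
    · subst h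
      simp [sub_self]
    · have h2 : Real.sqrt (c^2 - y^2) = Real.sqrt (c - y) * Real.sqrt (c + y) := by
        rw [show c^2 - y^2 = (c - y) * (c + y) by ring, Real.sqrt_mul (by linarith)]
      have hcy : 0 < Real.sqrt (c - y) := Real.sqrt_pos.2 (by linarith)
      have heq : (Real.sqrt c)⁻¹ * (Real.sqrt (c - y))⁻¹
          = (Real.sqrt (c - y) * Real.sqrt c)⁻¹ := by rw [mul_inv, mul_comm]
      rw [h2, heq]
      apply inv_anti₀ (by positivity)
      exact mul_le_mul_of_nonneg_left (Real.sqrt_le_sqrt (by linarith)) hcy.le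
  have half' : IntervalIntegrable (fun y => (Real.sqrt (c^2 - y^2))⁻¹) volume (-c) 0 := by
    have h2 := (IntervalIntegrable.iff_comp_neg (by finiteness)).mp half
    simp only [neg_zero] at h2
    have hfun : (fun x : ℝ => (Real.sqrt (c^2 - (-x)^2))⁻¹)
        = fun x => (Real.sqrt (c^2 - x^2))⁻¹ := by funext x; rw [neg_sq]
    rw [hfun] at h2
    exact h2.symm
  exact half'.trans half

lemma key_integral {ρ x : ℝ} (hρ : 0 < ρ) (hx : ρ < x) :
    ∫ y in (-ρ)..ρ, ((x - y) * Real.sqrt (ρ^2 - y^2))⁻¹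
      = Real.pi / Real.sqrt (x^2 - ρ^2) := by
  have hx0 : 0 < x := hρ.trans hx
  set K := Real.sqrt (x^2 - ρ^2) with hK
  have hKpos : 0 < K := Real.sqrt_pos.2 (by nlinarith)
  have hK2 : K^2 = x^2 - ρ^2 := Real.sq_sqrt (by nlinarith)
  set u : ℝ → ℝ := fun y => (ρ^2 - x*y)/(ρ*(x - y)) with hu
  set F : ℝ → ℝ := fun y => -(Real.arcsin (u y)) / K with hF
  have hxy : ∀ y ∈ Icc (-ρ) ρ, 0 < x - y := fun y hy => by
    have := hy.2; linarith
  -- continuity of F on Icc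
  have hcont : ContinuousOn F (Icc (-ρ) ρ) := by
    apply ContinuousOn.div_const
    apply ContinuousOn.neg
    apply Real.continuous_arcsin.comp_continuousOn
    apply ContinuousOn.div
    · fun_prop
    · fun_prop
    · intro y hy
      have := hxy y hy
      positivity
  -- derivative
  have hderiv : ∀ y ∈ Ioo (-ρ) ρ,
      HasDerivAt F (((x - y) * Real.sqrt (ρ^2 - y^2))⁻¹) y := by
    intro y hy
    have hxyp : 0 < x - y := hxy y (Ioo_subset_Icc_self hy)
    have hρy : 0 < ρ^2 - y^2 := by nlinarith [hy.1, hy.2]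
    have huy : HasDerivAt u ((ρ^2 - x^2)/(ρ*(x - y)^2)) y := by
      have h1 : HasDerivAt (fun y => ρ^2 - x*y) (-x) y := by
        simpa using ((hasDerivAt_id y).const_mul x).const_sub (ρ^2)
      have h2 : HasDerivAt (fun y => ρ*(x - y)) (-ρ) y := by
        simpa using (((hasDerivAt_id y).const_sub x).const_mul ρ)
      have := h1.div h2 (by positivity)
      refine this.congr_deriv ?_
      rw [div_eq_div_iff (by positivity) (by positivity)]
      ring
    have husq : (ρ*(x - y))^2 - (ρ^2 - x*y)^2 = (ρ^2 - y^2)*(x^2 - ρ^2) := by ring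
    have hxρ2 : 0 < x^2 - ρ^2 := by nlinarith
    have hprod : 0 < (ρ^2 - y^2)*(x^2 - ρ^2) := mul_pos hρy hxρ2
    have hbpos : 0 < ρ*(x - y) := mul_pos hρ hxyp
    have habs : |ρ^2 - x*y| < ρ*(x - y) := by
      rw [abs_lt]
      constructor <;> nlinarith [sq_nonneg (ρ^2 - x*y + ρ*(x-y)), sq_nonneg (ρ^2 - x*y - ρ*(x-y))]
    obtain ⟨habl, habr⟩ := abs_lt.mp habs
    have huIoo : u y ∈ Ioo (-1 : ℝ) 1 := by
      rw [hu]
      constructor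
      · rw [lt_div_iff₀ hbpos]
        linarith
      · rw [div_lt_iff₀ hbpos]
        linarith
    have harc := (Real.hasDerivAt_arcsin (ne_of_gt huIoo.1) (ne_of_lt huIoo.2)).comp y huy
    have hsq : 1 - u y ^ 2 = ((ρ^2 - y^2)*(x^2 - ρ^2))/(ρ*(x - y))^2 := by
      rw [hu]
      field_simp
      ring
    have hsqrt : Real.sqrt (1 - u y ^ 2) = Real.sqrt (ρ^2 - y^2) * K / (ρ*(x - y)) := by
      rw [hsq, hK, ← Real.sqrt_mul (le_of_lt hρy), Real.sqrt_div hprod.le,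
        Real.sqrt_sq hbpos.le]
    have hsρ : 0 < Real.sqrt (ρ^2 - y^2) := Real.sqrt_pos.2 hρy
    have hDF : HasDerivAt F (-(1 / Real.sqrt (1 - u y ^ 2) * ((ρ^2 - x^2)/(ρ*(x - y)^2))) / K) y :=
      (harc.neg).div_const K
    refine hDF.congr_deriv ?_
    rw [hsqrt]
    rw [eq_comm]
    field_simp
    linear_combination hK2
  -- integrability
  have hint : IntervalIntegrable (fun y => ((x - y) * Real.sqrt (ρ^2 - y^2))⁻¹)
      volume (-ρ) ρ := by
    have hmeas : AEStronglyMeasurable (fun y => ((x - y) * Real.sqrt (ρ^2 - y^2))⁻¹)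
        (volume.restrict (Set.uIoc (-ρ) ρ)) := by
      apply Measurable.aestronglyMeasurable
      apply Measurable.inv
      exact ((continuous_const.sub continuous_id).mul
        (continuous_const.sub (continuous_pow 2)).sqrt).measurable
    apply IntervalIntegrable.mono_fun (((sqrt_sing_integrable hρ).const_mul ((x - ρ)⁻¹))) hmeas
    rw [Filter.EventuallyLE, ae_restrict_iff' measurableSet_uIoc]
    filter_upwards with y hy
    rw [Set.uIoc_of_le (by linarith)] at hy
    have h1 : 0 < x - y := by have := hy.2; linarith
    have h2 : x - ρ ≤ x - y := by have := hy.2; linarith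
    have h3 : 0 ≤ Real.sqrt (ρ^2 - y^2) := Real.sqrt_nonneg _
    have h4 : (0:ℝ) < x - ρ := by linarith
    simp only [Real.norm_eq_abs]
    rw [abs_of_nonneg (inv_nonneg.2 (mul_nonneg h1.le h3)),
      abs_of_nonneg (mul_nonneg (inv_nonneg.2 h4.le) (inv_nonneg.2 h3)), mul_inv]
    exact mul_le_mul_of_nonneg_right (inv_anti₀ h4 h2) (inv_nonneg.2 h3)
  -- FTC
  have := intervalIntegral.integral_eq_sub_of_hasDeriv_right_of_le (by linarith)
    hcont (fun y hy => (hderiv y hy).hasDerivWithinAt) hint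
  rw [this]
  have huρ : u ρ = -1 := by
    show (ρ^2 - x*ρ)/(ρ*(x - ρ)) = -1
    rw [div_eq_iff (ne_of_gt (mul_pos hρ (by linarith)))]
    ring
  have huρ' : u (-ρ) = 1 := by
    show (ρ^2 - x*(-ρ))/(ρ*(x - (-ρ))) = 1
    rw [div_eq_one_iff_eq (ne_of_gt (mul_pos hρ (by linarith)))]
    ring
  rw [hF]
  simp only [huρ, huρ', Real.arcsin_neg_one, Real.arcsin_one]
  field_simp
  ring

lemma arccos_eq_integral {a c : ℝ} (ha : 0 < a) (hac : a < c) :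
    ∫ s in a..c, (Real.sqrt (c^2 - s^2))⁻¹ = Real.arccos (a / c) := by
  have hc : 0 < c := ha.trans hac
  set F : ℝ → ℝ := fun s => -Real.arccos (s / c) with hF
  have hcont : ContinuousOn F (Icc a c) := by
    apply ContinuousOn.neg
    exact Real.continuous_arccos.comp_continuousOn (continuousOn_id.div_const c)
  have hderiv : ∀ s ∈ Ioo a c, HasDerivAt F ((Real.sqrt (c^2 - s^2))⁻¹) s := by
    intro s hs
    have hs0 : 0 < s := ha.trans hs.1
    have hsc : s < c := hs.2
    have h1 : s / c ≠ -1 := by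
      have : 0 < s / c := by positivity
      linarith
    have h2 : s / c ≠ 1 := ne_of_lt ((div_lt_one hc).2 hsc)
    have hdiv : HasDerivAt (fun s : ℝ => s / c) (1 / c) s := by
      simpa using (hasDerivAt_id s).div_const c
    have harc := ((Real.hasDerivAt_arccos h1 h2).comp s hdiv).neg
    refine harc.congr_deriv ?_
    have hpos : 0 < c^2 - s^2 := by nlinarith
    have hsq : 1 - (s / c)^2 = (c^2 - s^2) / c^2 := by field_simp
    rw [hsq, Real.sqrt_div hpos.le, Real.sqrt_sq hc.le]
    have hssq : 0 < Real.sqrt (c^2 - s^2) := Real.sqrt_pos.2 hpos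
    field_simp
  have hint : IntervalIntegrable (fun s => (Real.sqrt (c^2 - s^2))⁻¹) volume a c :=
    (sqrt_sing_integrable hc).mono_set (by
      rw [Set.uIcc_of_le hac.le, Set.uIcc_of_le (by linarith)]
      exact Icc_subset_Icc (by linarith) le_rfl)
  rw [intervalIntegral.integral_eq_sub_of_hasDeriv_right_of_le hac.le hcont
    (fun s hs => (hderiv s hs).hasDerivWithinAt) hint]
  rw [hF]
  simp only [div_self (ne_of_gt hc)]
  rw [Real.arccos_one]
  ring

lemma outer_integral {α x r : ℝ} (hα : 0 < α) (hα1 : α < 1) (hr2 : r^2 = 1 - α^2)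
    (hr0 : 0 < r) (hrx : r < x) :
    ∫ s in α..(1:ℝ), (Real.sqrt (x^2 - 1 + s^2))⁻¹
      = Real.log (1 + x) - Real.log (α + Real.sqrt (x^2 - r^2)) := by
  have hx0 : 0 < x := hr0.trans hrx
  have hxr : 0 < x^2 - r^2 := by nlinarith
  set G : ℝ → ℝ := fun s => Real.log (s + Real.sqrt (x^2 - 1 + s^2)) with hG
  have hderiv : ∀ s ∈ Set.uIcc α 1, HasDerivAt G ((Real.sqrt (x^2 - 1 + s^2))⁻¹) s := by
    intro s hs
    rw [Set.uIcc_of_le hα1.le] at hs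
    have hs0 : 0 < s := lt_of_lt_of_le hα hs.1
    have hq : 0 < x^2 - 1 + s^2 := by nlinarith [hs.1]
    have hsqq : 0 < Real.sqrt (x^2 - 1 + s^2) := Real.sqrt_pos.2 hq
    have hqd : HasDerivAt (fun s : ℝ => x^2 - 1 + s^2) (2*s) s := by
      simpa [mul_comm] using (hasDerivAt_pow 2 s).const_add (x^2 - 1)
    have hsd := (Real.hasDerivAt_sqrt (ne_of_gt hq)).comp s hqd
    have hsum := (hasDerivAt_id s).add hsd
    have hlog := (Real.hasDerivAt_log (by positivity :
        s + Real.sqrt (x^2 - 1 + s^2) ≠ 0)).comp s hsum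
    refine hlog.congr_deriv ?_
    field_simp
    ring
  have hint : IntervalIntegrable (fun s => (Real.sqrt (x^2 - 1 + s^2))⁻¹) volume α 1 := by
    apply ContinuousOn.intervalIntegrable
    apply ContinuousOn.inv₀
    · fun_prop
    · intro s hs
      rw [Set.uIcc_of_le hα1.le] at hs
      have : 0 < x^2 - 1 + s^2 := by nlinarith [hs.1, lt_of_lt_of_le hα hs.1]
      positivity
  rw [intervalIntegral.integral_eq_sub_of_hasDerivAt hderiv hint]
  rw [hG]
  have h1 : x^2 - 1 + 1^2 = x^2 := by ring
  have h2 : x^2 - 1 + α^2 = x^2 - r^2 := by rw [hr2]; ring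
  simp only [one_pow]
  rw [show x^2 - 1 + 1 = x^2 by ring, h2, Real.sqrt_sq hx0.le]

set_option maxHeartbeats 1000000 in
theorem arccos_integral_identity (α : ℝ) (hα : α ∈ Set.Ioo (0 : ℝ) 1)
    (r : ℝ) (hr : r = Real.sqrt (1 - α ^ 2))
    (x : ℝ) (hx : r < x) :
    (1 / Real.pi) * ∫ y in (-r)..r,
        (1 / (x - y)) * Real.arccos (α / Real.sqrt (1 - y ^ 2)) =
      Real.log (1 + x) - Real.log (α + Real.sqrt (x ^ 2 - r ^ 2)) := by
  obtain ⟨hα0, hα1⟩ := hα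
  have h1α : 0 < 1 - α^2 := by nlinarith
  have hr2 : r^2 = 1 - α^2 := by rw [hr]; exact Real.sq_sqrt h1α.le
  have hr0 : 0 < r := by rw [hr]; positivity
  have hr1 : r < 1 := by nlinarith
  have hx0 : 0 < x := hr0.trans hx
  set μ := volume.restrict (Ioo (-r) r) with hμ
  set ν := volume.restrict (Ioo α (1:ℝ)) with hν
  set f : ℝ → ℝ → ℝ := fun y s => (x - y)⁻¹ * (Real.sqrt (1 - y^2 - s^2))⁻¹ with hf
  -- Step A : inner s-integral
  have stepA : ∀ y ∈ Ioo (-r) r, (∫ s, f y s ∂ν)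
      = (x - y)⁻¹ * Real.arccos (α / Real.sqrt (1 - y^2)) := by
    intro y hy
    have hy2 : y^2 < r^2 := by nlinarith [hy.1, hy.2]
    have h1y : 0 < 1 - y^2 := by nlinarith
    set c := Real.sqrt (1 - y^2) with hc
    have hc2 : c^2 = 1 - y^2 := Real.sq_sqrt h1y.le
    have hc0 : 0 < c := Real.sqrt_pos.2 h1y
    have hαc : α < c := by nlinarith
    have hc1 : c ≤ 1 := by
      rw [hc]
      calc Real.sqrt (1 - y^2) ≤ Real.sqrt 1 := Real.sqrt_le_sqrt (by nlinarith)
      _ = 1 := Real.sqrt_one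
    have hcongr : EqOn (fun s => (Real.sqrt (1 - y^2 - s^2))⁻¹)
        ((Ioo α c).indicator (fun s => (Real.sqrt (c^2 - s^2))⁻¹)) (Ioo α 1) := by
      intro s hs
      by_cases hsc : s < c
      · have hmem : s ∈ Ioo α c := ⟨hs.1, hsc⟩
        rw [indicator_of_mem hmem]
        show (Real.sqrt (1 - y^2 - s^2))⁻¹ = (Real.sqrt (c^2 - s^2))⁻¹
        rw [show (1:ℝ) - y^2 - s^2 = c^2 - s^2 by rw [hc2]]
      · rw [indicator_of_notMem (fun h => hsc h.2)]
        show (Real.sqrt (1 - y^2 - s^2))⁻¹ = 0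
        have hcs : c ≤ s := not_lt.mp hsc
        have : (1:ℝ) - y^2 - s^2 ≤ 0 := by nlinarith
        simp [Real.sqrt_eq_zero'.2 this]
    calc (∫ s, f y s ∂ν) = (x - y)⁻¹ * ∫ s, (Real.sqrt (1 - y^2 - s^2))⁻¹ ∂ν := by
          rw [hf]; exact MeasureTheory.integral_const_mul _ _
      _ = (x - y)⁻¹ * Real.arccos (α / c) := by
          rw [hν, setIntegral_congr_fun measurableSet_Ioo hcongr,
            setIntegral_indicator measurableSet_Ioo,
            Set.inter_eq_self_of_subset_right (Set.Ioo_subset_Ioo_right hc1),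
            ← integral_Ioc_eq_integral_Ioo, ← intervalIntegral.integral_of_le hαc.le,
            arccos_eq_integral hα0 hαc]
  -- Step A' : s-integrability
  have stepA' : ∀ y ∈ Ioo (-r) r, Integrable (fun s => f y s) ν := by
    intro y hy
    have hy2 : y^2 < r^2 := by nlinarith [hy.1, hy.2]
    have h1y : 0 < 1 - y^2 := by nlinarith
    set c := Real.sqrt (1 - y^2) with hc
    have hc2 : c^2 = 1 - y^2 := Real.sq_sqrt h1y.le
    have hc0 : 0 < c := Real.sqrt_pos.2 h1y
    have hαc : α < c := by nlinarith
    have hIntOn : IntegrableOn (fun s => (Real.sqrt (c^2 - s^2))⁻¹) (Ioo α c) volume := by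
      rw [← intervalIntegrable_iff_integrableOn_Ioo_of_le hαc.le]
      exact (sqrt_sing_integrable hc0).mono_set (by
        rw [Set.uIcc_of_le hαc.le, Set.uIcc_of_le (by linarith)]
        exact Icc_subset_Icc (by linarith) le_rfl)
    have hi1 : Integrable ((Ioo α c).indicator (fun s => (Real.sqrt (c^2 - s^2))⁻¹)) ν :=
      (hIntOn.integrable_indicator measurableSet_Ioo).restrict
    have hi2 := hi1.const_mul ((x - y)⁻¹)
    apply hi2.congr
    filter_upwards [ae_restrict_mem measurableSet_Ioo] with s hs
    have hcongr : (Real.sqrt (1 - y^2 - s^2))⁻¹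
        = (Ioo α c).indicator (fun s => (Real.sqrt (c^2 - s^2))⁻¹) s := by
      by_cases hsc : s < c
      · have hmem : s ∈ Ioo α c := ⟨hs.1, hsc⟩
        rw [indicator_of_mem hmem]
        rw [show (1:ℝ) - y^2 - s^2 = c^2 - s^2 by rw [hc2]]
      · rw [indicator_of_notMem (fun h => hsc h.2)]
        have hcs : c ≤ s := not_lt.mp hsc
        have : (1:ℝ) - y^2 - s^2 ≤ 0 := by nlinarith
        simp [Real.sqrt_eq_zero'.2 this]
    rw [hf]
    simp only
    rw [hcongr]
  -- Step B : inner y-integral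
  have stepB : ∀ s ∈ Ioo α 1, (∫ y, f y s ∂μ)
      = Real.pi * (Real.sqrt (x^2 - 1 + s^2))⁻¹ := by
    intro s hs
    have hs0 : 0 < s := hα0.trans hs.1
    have h1s : 0 < 1 - s^2 := by nlinarith [hs.1, hs.2]
    set ρ := Real.sqrt (1 - s^2) with hρ
    have hρ2 : ρ^2 = 1 - s^2 := Real.sq_sqrt h1s.le
    have hρ0 : 0 < ρ := Real.sqrt_pos.2 h1s
    have hρr : ρ < r := by nlinarith [hs.1]
    have hxρ : ρ < x := hρr.trans hx
    have hcongr : EqOn (fun y => f y s)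
        ((Ioo (-ρ) ρ).indicator (fun y => ((x - y) * Real.sqrt (ρ^2 - y^2))⁻¹))
        (Ioo (-r) r) := by
      intro y hy
      by_cases hmem : y ∈ Ioo (-ρ) ρ
      · rw [indicator_of_mem hmem, hf]
        simp only
        rw [show (1:ℝ) - y^2 - s^2 = ρ^2 - y^2 by rw [hρ2]; ring, mul_inv]
      · rw [indicator_of_notMem hmem, hf]
        simp only
        have hy2 : ρ^2 ≤ y^2 := by
          rcases not_and_or.mp (fun h => hmem ⟨h.1, h.2⟩) with h | h
          · push_neg at h; nlinarith
          · push_neg at h; nlinarith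
        have : (1:ℝ) - y^2 - s^2 ≤ 0 := by nlinarith
        simp [Real.sqrt_eq_zero'.2 this]
    rw [hμ, setIntegral_congr_fun measurableSet_Ioo hcongr,
      setIntegral_indicator measurableSet_Ioo,
      Set.inter_eq_self_of_subset_right (Set.Ioo_subset_Ioo (by linarith) hρr.le),
      ← integral_Ioc_eq_integral_Ioo, ← intervalIntegral.integral_of_le (by linarith),
      key_integral hρ0 hxρ,
      show x^2 - ρ^2 = x^2 - 1 + s^2 by rw [hρ2]; ring, div_eq_mul_inv]
  -- Step C : integrability of uncurry f
  have hmeas_unc : AEStronglyMeasurable (Function.uncurry f) (μ.prod ν) := by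
    apply Measurable.aestronglyMeasurable
    have : Measurable fun p : ℝ × ℝ => (x - p.1)⁻¹ * (Real.sqrt (1 - p.1^2 - p.2^2))⁻¹ :=
      ((measurable_const.sub measurable_fst).inv).mul
        ((Real.continuous_sqrt.measurable.comp
          ((measurable_const.sub (measurable_fst.pow_const 2)).sub
            (measurable_snd.pow_const 2))).inv)
    exact this
  have hInt : Integrable (Function.uncurry f) (μ.prod ν) := by
    rw [MeasureTheory.integrable_prod_iff hmeas_unc]
    constructor
    · rw [hμ]
      filter_upwards [ae_restrict_mem measurableSet_Ioo] with y hy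
      simp only [Function.uncurry_apply_pair]
      exact stepA' y hy
    · apply Integrable.mono' (g := fun _ => (x - r)⁻¹ * Real.pi)
      · rw [hμ]
        exact (integrableOn_const measure_Ioo_lt_top.ne)
      · exact hmeas_unc.norm.integral_prod_right'
      · rw [hμ]
        filter_upwards [ae_restrict_mem measurableSet_Ioo] with y hy
        simp only [Function.uncurry_apply_pair]
        have hxy : 0 < x - y := by have := hy.2; linarith
        have hnn : ∀ s, 0 ≤ f y s := fun s => by
          rw [hf]; positivity
        have heq : (∫ s, ‖f y s‖ ∂ν) = ∫ s, f y s ∂ν := by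
          apply MeasureTheory.integral_congr_ae
          filter_upwards with s
          exact Real.norm_of_nonneg (hnn s)
        rw [Real.norm_eq_abs, heq, stepA y hy,
          abs_of_nonneg (mul_nonneg (inv_nonneg.2 hxy.le) (Real.arccos_nonneg _))]
        apply mul_le_mul
        · exact inv_anti₀ (by linarith) (by have := hy.2; linarith)
        · exact Real.arccos_le_pi _
        · exact Real.arccos_nonneg _
        · have hxr' : (0:ℝ) < x - r := by linarith
          positivity
  have swap := MeasureTheory.integral_integral_swap hInt
  -- assemble
  have lhs1 : (∫ y in (-r)..r, (1 / (x - y)) * Real.arccos (α / Real.sqrt (1 - y ^ 2)))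
      = ∫ y, (∫ s, f y s ∂ν) ∂μ := by
    rw [intervalIntegral.integral_of_le (by linarith), integral_Ioc_eq_integral_Ioo, hμ]
    apply setIntegral_congr_fun measurableSet_Ioo
    intro y hy
    show (1 / (x - y)) * Real.arccos (α / Real.sqrt (1 - y ^ 2)) = ∫ s, f y s ∂ν
    rw [stepA y hy, one_div]
  have rhs1 : (∫ s, (∫ y, f y s ∂μ) ∂ν)
      = Real.pi * (Real.log (1 + x) - Real.log (α + Real.sqrt (x^2 - r^2))) := by
    rw [hν, setIntegral_congr_fun measurableSet_Ioo (fun s hs => stepB s hs),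
      MeasureTheory.integral_const_mul, ← integral_Ioc_eq_integral_Ioo,
      ← intervalIntegral.integral_of_le hα1.le, outer_integral hα0 hα1 hr2 hr0 hx]
  rw [lhs1, swap, rhs1, ← mul_assoc, one_div_mul_cancel Real.pi_ne_zero, one_mul]
end

section
/- Let α ∈ (0,1) and r = √(1−α²). For every real x with x > r and x ≠ 1, (α/π) · ∫_{−r}^{r} (1/(x−y)) · ( y / ((1−y²)·√(r²−y²)) ) dy = α·x / ((1−x²)·√(x²−r²)) + 1/(2(x−1)) − 1/(2(x+1)). -/
set_option maxHeartbeats 1000000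

open MeasureTheory Filter Set intervalIntegral

lemma aux_int_half (r C : ℝ) (hr : 0 < r) (f : ℝ → ℝ)
    (hm : AEStronglyMeasurable f (volume.restrict (uIoc (0:ℝ) r)))
    (hb : ∀ y ∈ Ioc (0:ℝ) r, |f y| ≤ C / Real.sqrt (r - y)) :
    IntervalIntegrable f volume 0 r := by
  have base : IntervalIntegrable (fun y : ℝ => C * (r - y) ^ (-(1/2) : ℝ)) volume 0 r := by
    have h0 : IntervalIntegrable (fun y : ℝ => y ^ (-(1/2) : ℝ)) volume 0 r :=
      intervalIntegral.intervalIntegrable_rpow' (by norm_num)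
    have h1 := (h0.comp_sub_left r)
    simpa using (h1.const_mul C).symm
  refine base.mono_fun' hm ?_
  filter_upwards [ae_restrict_mem measurableSet_uIoc] with y hy
  rw [uIoc_of_le hr.le] at hy
  have h1 : (0:ℝ) ≤ r - y := by linarith [hy.2]
  have : (r - y) ^ (-(1/2) : ℝ) = 1 / Real.sqrt (r - y) := by
    rw [Real.rpow_neg h1, Real.sqrt_eq_rpow, one_div]
    norm_num
  rw [Real.norm_eq_abs, this]
  calc |f y| ≤ C / Real.sqrt (r - y) := hb y hy
    _ = C * (1 / Real.sqrt (r - y)) := by ring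

lemma bound_half (r c : ℝ) (d : ℝ → ℝ) (hr : 0 < r) (hc : r < c)
    (hd : ∀ y ∈ Ioc (0:ℝ) r, c - r ≤ d y) :
    ∀ y ∈ Ioc (0:ℝ) r, |1/((d y)*Real.sqrt (r^2-y^2))| ≤
      (1/((c-r)*Real.sqrt r)) / Real.sqrt (r - y) := by
  intro y hy
  have hcr : (0:ℝ) < c - r := by linarith
  have hdy : (0:ℝ) < d y := lt_of_lt_of_le hcr (hd y hy)
  rcases eq_or_lt_of_le hy.2 with h | h
  · rw [← h]
    simp [show y^2 - y^2 = 0 by ring]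
  · have h1 : (0:ℝ) < r - y := by linarith
    have h2 : (0:ℝ) < r + y := by linarith [hy.1]
    have hsq : Real.sqrt (r^2 - y^2) = Real.sqrt (r - y) * Real.sqrt (r + y) := by
      rw [← Real.sqrt_mul h1.le]; ring_nf
    have hs1 : (0:ℝ) < Real.sqrt (r - y) := Real.sqrt_pos.2 h1
    have hs2 : (0:ℝ) < Real.sqrt (r + y) := Real.sqrt_pos.2 h2
    have hsr : (0:ℝ) < Real.sqrt r := Real.sqrt_pos.2 hr
    have hle : Real.sqrt r ≤ Real.sqrt (r + y) := Real.sqrt_le_sqrt (by linarith [hy.1])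
    have hpos : (0:ℝ) < (d y) * Real.sqrt (r^2 - y^2) := by
      rw [hsq]; positivity
    rw [abs_of_nonneg (by positivity)]
    rw [div_div, one_div, one_div]
    apply inv_anti₀
    · positivity
    · rw [hsq]
      calc (c - r) * Real.sqrt r * Real.sqrt (r - y)
          ≤ d y * Real.sqrt (r + y) * Real.sqrt (r - y) := by
            apply mul_le_mul_of_nonneg_right _ hs1.le
            exact mul_le_mul (hd y hy) hle hsr.le hdy.le
        _ = d y * (Real.sqrt (r - y) * Real.sqrt (r + y)) := by ring

lemma key_integrable (r c : ℝ) (hr : 0 < r) (hc : r < c) :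
    IntervalIntegrable (fun y => 1/((c-y)*Real.sqrt (r^2-y^2))) volume (-r) r := by
  have hmeas : ∀ d : ℝ, ∀ s : Set ℝ, AEStronglyMeasurable
      (fun y : ℝ => 1/((d+y)*Real.sqrt (r^2-y^2))) (volume.restrict s) := by
    intro d s
    apply Measurable.aestronglyMeasurable
    fun_prop
  have hpos : IntervalIntegrable (fun y => 1/((c-y)*Real.sqrt (r^2-y^2))) volume 0 r := by
    apply aux_int_half r _ hr
    · simpa [sub_eq_add_neg, ← neg_add'] using
        (by
          apply Measurable.aestronglyMeasurable (by fun_prop) :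
          AEStronglyMeasurable (fun y : ℝ => 1/((c-y)*Real.sqrt (r^2-y^2)))
            (volume.restrict (uIoc (0:ℝ) r)))
    · exact bound_half r c (fun y => c - y) hr hc (fun y hy => by show c - r ≤ c - y; linarith [hy.2])
  have hneg : IntervalIntegrable (fun y => 1/((c-y)*Real.sqrt (r^2-y^2))) volume (-r) 0 := by
    have h2 : IntervalIntegrable (fun y => 1/((c+y)*Real.sqrt (r^2-y^2))) volume 0 r := by
      apply aux_int_half r _ hr
      · exact hmeas c _
      · exact bound_half r c (fun y => c + y) hr hc (fun y hy => by show c - r ≤ c + y; linarith [hy.1])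
    have h3 := (IntervalIntegrable.iff_comp_neg).1 h2
    have h4 : (fun x : ℝ => 1/((c + -x)*Real.sqrt (r^2-(-x)^2))) =
        (fun x : ℝ => 1/((c-x)*Real.sqrt (r^2-x^2))) := by
      funext x; rw [neg_sq]; ring_nf
    rw [h4] at h3
    simpa using h3.symm
  exact hneg.trans hpos

lemma key_value (r c : ℝ) (hr : 0 < r) (hc : r < c) :
    ∫ y in (-r)..r, 1/((c-y)*Real.sqrt (r^2-y^2)) = Real.pi / Real.sqrt (c^2 - r^2) := by
  have hc0 : 0 < c := hr.trans hc
  have hcr2 : 0 < c^2 - r^2 := by nlinarith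
  set s := Real.sqrt (c^2 - r^2) with hs_def
  have hs : 0 < s := Real.sqrt_pos.2 hcr2
  have hs2 : s^2 = c^2 - r^2 := Real.sq_sqrt hcr2.le
  set F : ℝ → ℝ := fun y => -(s⁻¹) * Real.arcsin ((r^2 - c*y)/(r*(c-y))) with hF_def
  have hcont : ContinuousOn F (Icc (-r) r) := by
    apply ContinuousOn.mul continuousOn_const
    apply Real.continuous_arcsin.comp_continuousOn
    apply ContinuousOn.div (by fun_prop) (by fun_prop)
    intro y hy
    have : 0 < c - y := by linarith [hy.2]
    positivity
  have hderiv : ∀ y ∈ Ioo (-r) r,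
      HasDerivAt F (1/((c-y)*Real.sqrt (r^2-y^2))) y := by
    intro y hy
    obtain ⟨hy1, hy2⟩ := hy
    have hcy : 0 < c - y := by linarith
    have hden : 0 < r*(c-y) := by positivity
    have hryp : 0 < r^2 - y^2 := by nlinarith
    set t := Real.sqrt (r^2 - y^2) with ht_def
    have ht : 0 < t := Real.sqrt_pos.2 hryp
    have ht2 : t^2 = r^2 - y^2 := Real.sq_sqrt hryp.le
    have hnum : HasDerivAt (fun y : ℝ => r^2 - c*y) (-c) y := by
      simpa using ((hasDerivAt_id y).const_mul c).const_sub (r^2)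
    have hdenf : HasDerivAt (fun y : ℝ => r*(c-y)) (-r) y := by
      simpa using ((hasDerivAt_id y).const_sub c).const_mul r
    have hg : HasDerivAt (fun y : ℝ => (r^2 - c*y)/(r*(c-y)))
        (((-c) * (r*(c-y)) - (r^2 - c*y) * (-r)) / (r*(c-y))^2) y :=
      hnum.div hdenf hden.ne'
    have habs : |r^2 - c*y| < r*(c-y) := by
      rw [abs_lt]; constructor <;> nlinarith
    have hglt : |(r^2 - c*y)/(r*(c-y))| < 1 := by
      rw [abs_div, abs_of_pos hden]
      exact (div_lt_one hden).2 habs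
    have hg1 : (r^2 - c*y)/(r*(c-y)) ≠ 1 := ne_of_lt (lt_of_abs_lt hglt)
    have hgm1 : (r^2 - c*y)/(r*(c-y)) ≠ -1 :=
      ne_of_gt (neg_lt_of_abs_lt hglt)
    have harc := Real.hasDerivAt_arcsin hgm1 hg1
    have hcomp := (harc.comp y hg).const_mul (-(s⁻¹))
    have hkey : 1 - ((r^2 - c*y)/(r*(c-y)))^2 = (s*t/(r*(c-y)))^2 := by
      field_simp
      nlinarith [hs2, ht2, sq_nonneg (s*t)]
    have hsqrt : Real.sqrt (1 - ((r^2 - c*y)/(r*(c-y)))^2) = s*t/(r*(c-y)) := by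
      rw [hkey, Real.sqrt_sq (by positivity)]
    refine hcomp.congr_deriv ?_
    rw [hsqrt]
    field_simp
    linear_combination -hs2
  have hint := key_integrable r c hr hc
  rw [integral_eq_sub_of_hasDeriv_right_of_le (by linarith) hcont
    (fun y hy => (hderiv y hy).hasDerivWithinAt) hint]
  have e1 : (r^2 - c*r)/(r*(c-r)) = -1 := by
    have : c - r ≠ 0 := by linarith
    field_simp
    ring
  have e2 : (r^2 - c*(-r))/(r*(c-(-r))) = 1 := by
    have : c + r ≠ 0 := by positivity
    rw [div_eq_one_iff_eq (by rw [sub_neg_eq_add]; positivity)]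
    ring
  simp only [hF_def, e1, e2, Real.arcsin_neg_one, Real.arcsin_one]
  field_simp
  ring

theorem contour_integral_identity (α : ℝ) (hα : α ∈ Set.Ioo (0 : ℝ) 1)
    (r : ℝ) (hr : r = Real.sqrt (1 - α ^ 2))
    (x : ℝ) (hx : r < x) (hx1 : x ≠ 1) :
    (α / Real.pi) * ∫ y in (-r)..r,
        (1 / (x - y)) * (y / ((1 - y ^ 2) * Real.sqrt (r ^ 2 - y ^ 2))) =
      α * x / ((1 - x ^ 2) * Real.sqrt (x ^ 2 - r ^ 2)) +
        1 / (2 * (x - 1)) - 1 / (2 * (x + 1)) := by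
  obtain ⟨hα0, hα1⟩ := hα
  have ha2 : 0 < 1 - α^2 := by nlinarith
  have hr0 : 0 < r := hr ▸ Real.sqrt_pos.2 ha2
  have hr2 : r^2 = 1 - α^2 := hr ▸ Real.sq_sqrt ha2.le
  have hr1 : r < 1 := by nlinarith
  have hx0 : 0 < x := hr0.trans hx
  have hxm1 : x + 1 ≠ 0 := by positivity
  have hxp1 : x - 1 ≠ 0 := sub_ne_zero.2 hx1
  have hx2 : 1 - x^2 ≠ 0 := by
    intro h; apply hx1; nlinarith
  set A : ℝ := x/(1-x^2) with hA
  set B : ℝ := 1/(2*(x-1)) with hB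
  set C : ℝ := -(1/(2*(x+1))) with hC
  have hne : ∀ᵐ y : ℝ ∂volume, y ≠ r := by
    rw [ae_iff]
    simpa using measure_singleton (α := ℝ) r
  have hae : ∀ᵐ y ∂(volume : Measure ℝ), y ∈ uIoc (-r) r →
      (1 / (x - y)) * (y / ((1 - y ^ 2) * Real.sqrt (r ^ 2 - y ^ 2))) =
      A * (1/((x-y)*Real.sqrt (r^2-y^2))) + B * (1/((1-y)*Real.sqrt (r^2-y^2)))
        + C * (1/((1+y)*Real.sqrt (r^2-y^2))) := by
    filter_upwards [hne] with y hy hmem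
    rw [uIoc_of_le (by linarith : -r ≤ r)] at hmem
    have hy2 : y < r := lt_of_le_of_ne hmem.2 hy
    have hy1 : -r < y := hmem.1
    have hryp : 0 < r^2 - y^2 := by nlinarith
    set t := Real.sqrt (r^2 - y^2) with hts
    have ht : 0 < t := Real.sqrt_pos.2 hryp
    have hxy : x - y ≠ 0 := by intro h; nlinarith
    have h1y : 1 - y ≠ 0 := by intro h; nlinarith
    have h1y' : 1 + y ≠ 0 := by intro h; nlinarith
    have h1y2 : 1 - y^2 ≠ 0 := by
      intro h
      rcases mul_eq_zero.1 (show (1-y)*(1+y) = 0 by nlinarith) with h' | h' <;> tauto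
    rw [hA, hB, hC]
    field_simp
    ring
  rw [intervalIntegral.integral_congr_ae hae]
  have hI1 := key_integrable r x hr0 hx
  have hI2 := key_integrable r 1 hr0 hr1
  have hI3 : IntervalIntegrable (fun y => 1/((1+y)*Real.sqrt (r^2-y^2))) volume (-r) r := by
    have h3 := (IntervalIntegrable.iff_comp_neg).1 hI2
    have h4 : (fun y : ℝ => 1/((1 - -y)*Real.sqrt (r^2-(-y)^2))) =
        (fun y : ℝ => 1/((1+y)*Real.sqrt (r^2-y^2))) := by
      funext y; rw [neg_sq]; ring_nf
    rw [h4] at h3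
    simpa using h3.symm
  rw [intervalIntegral.integral_add ((hI1.const_mul A).add (hI2.const_mul B))
      (hI3.const_mul C),
    intervalIntegral.integral_add (hI1.const_mul A) (hI2.const_mul B),
    intervalIntegral.integral_const_mul, intervalIntegral.integral_const_mul,
    intervalIntegral.integral_const_mul]
  have v1 := key_value r x hr0 hx
  have v2 : (∫ y in (-r)..r, 1/((1-y)*Real.sqrt (r^2-y^2))) = Real.pi / α := by
    rw [key_value r 1 hr0 hr1]
    congr 1
    rw [show (1:ℝ)^2 - r^2 = α^2 by rw [hr2]; ring, Real.sqrt_sq hα0.le]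
  have v3 : (∫ y in (-r)..r, 1/((1+y)*Real.sqrt (r^2-y^2))) = Real.pi / α := by
    rw [← v2]
    have h4 : (fun y : ℝ => 1/((1+y)*Real.sqrt (r^2-y^2))) =
        (fun y : ℝ => 1/((1 - -y)*Real.sqrt (r^2-(-y)^2))) := by
      funext y; rw [neg_sq]; ring_nf
    rw [h4, intervalIntegral.integral_comp_neg (fun y => 1/((1-y)*Real.sqrt (r^2-y^2)))]
    simp
  rw [v1, v2, v3]
  have hsx : 0 < Real.sqrt (x^2 - r^2) := Real.sqrt_pos.2 (by nlinarith)
  rw [hA, hB, hC]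
  field_simp
  ring
end

section
/- Let α ∈ (0,1) and r = √(1−α²). Then C(α) = ∫_{r}^{1} ( log(α + √(x²−r²)) − (1/2)·log(1−x²) ) dx, where C(α) = ((1+α)·log(1+α) + (1−α)·log(1−α))/2. -/
open MeasureTheory Filter Set intervalIntegral

/-- The constant `C(α)`. -/
noncomputable def Cconst (α : ℝ) : ℝ :=
  ((1 + α) * Real.log (1 + α) + (1 - α) * Real.log (1 - α)) / 2

private lemma cconst_alg (α x S L A : ℝ) (hα : 0 < α) (hS : 0 < S) (hx : 0 < x) (hx1 : x < 1)
    (hxS : 0 < x + S) (haxS : 0 < α*x + S) (haS : 0 < α + S)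
    (h2 : S^2 = x^2 - (1 - α^2)) :
    A - 1/2 * L =
      1 * A + x * ((2*x / (2*S)) / (α + S))
      + α * ((1 + 2*x / (2*S)) / (x + S))
      - (α * 1 + 2*x / (2*S)) / (α*x + S)
      + ((L + 1) * -(2*x) * (2*(1+x)) - (1 - x^2) * L * (2*1)) / (2*(1+x))^2 := by
  have h1x : (0:ℝ) < 1 + x := by linarith
  field_simp
  linear_combination ((2*S^2*x^2) + (2*S^2*x) + (4*S*x^2*α) + (2*S*x*α) + (2*S*x^3)
    + (2*S*x^2) + (2*S*x^3*α) + (4*x^3*α) + (2*x^2*α) + (2*x^4*α)) * h2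

theorem Cconst_integral_formula (α : ℝ) (hα : α ∈ Set.Ioo (0 : ℝ) 1)
    (r : ℝ) (hr : r = Real.sqrt (1 - α ^ 2)) :
    Cconst α = ∫ x in r..1,
      (Real.log (α + Real.sqrt (x ^ 2 - r ^ 2)) - (1 / 2) * Real.log (1 - x ^ 2)) := by
  obtain ⟨hα0, hα1⟩ := hα
  have h1a2 : 0 < 1 - α ^ 2 := by nlinarith
  have hr0 : 0 < r := hr ▸ Real.sqrt_pos.mpr h1a2
  have hr2 : r ^ 2 = 1 - α ^ 2 := by rw [hr]; exact Real.sq_sqrt h1a2.le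
  have hr1 : r < 1 := by nlinarith
  set G : ℝ → ℝ := fun x => x * Real.log (α + Real.sqrt (x ^ 2 - r ^ 2))
      + α * Real.log (x + Real.sqrt (x ^ 2 - r ^ 2))
      - Real.log (α * x + Real.sqrt (x ^ 2 - r ^ 2))
      + (1 - x ^ 2) * Real.log (1 - x ^ 2) / (2 * (1 + x)) with hG
  have hsqc : Continuous fun x : ℝ => Real.sqrt (x ^ 2 - r ^ 2) :=
    Real.continuous_sqrt.comp ((continuous_pow 2).sub continuous_const)
  -- continuity of G on [r, 1]
  have hcont : ContinuousOn G (Icc r 1) := by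
    apply ContinuousOn.add
    apply ContinuousOn.sub
    apply ContinuousOn.add
    · exact continuousOn_id.mul (((continuous_const.add hsqc).continuousOn).log
        (fun x _ => by dsimp only [Pi.add_apply]; positivity))
    · refine continuousOn_const.mul (((continuous_id.add hsqc).continuousOn).log
        (fun x hx => ?_))
      have hx0 : 0 < x := lt_of_lt_of_le hr0 hx.1
      have := Real.sqrt_nonneg (x ^ 2 - r ^ 2)
      dsimp only [Pi.add_apply, id_eq]
      positivity
    · refine ((continuous_const.mul continuous_id).add hsqc).continuousOn.log
        (fun x hx => ?_)
      have hx0 : 0 < x := lt_of_lt_of_le hr0 hx.1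
      have := Real.sqrt_nonneg (x ^ 2 - r ^ 2)
      dsimp only [Pi.add_apply, Pi.mul_apply, id_eq]
      positivity
    · refine ContinuousOn.div
        ((Real.continuous_mul_log.comp (continuous_const.sub (continuous_pow 2))).continuousOn)
        ((continuous_const.mul (continuous_const.add continuous_id)).continuousOn)
        (fun x hx => ?_)
      have hx0 : 0 < x := lt_of_lt_of_le hr0 hx.1
      positivity
  -- derivative of G on (r, 1)
  have hderiv : ∀ x ∈ Ioo r 1, HasDerivAt G
      (Real.log (α + Real.sqrt (x ^ 2 - r ^ 2)) - (1 / 2) * Real.log (1 - x ^ 2)) x := by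
    intro x hx
    obtain ⟨hxr, hx1⟩ := hx
    have hx0 : 0 < x := lt_trans hr0 hxr
    have hx2 : r ^ 2 < x ^ 2 := by nlinarith
    have hSpos : 0 < Real.sqrt (x ^ 2 - r ^ 2) := Real.sqrt_pos.mpr (by linarith)
    set S := Real.sqrt (x ^ 2 - r ^ 2) with hSdef
    have hS2 : S ^ 2 = x ^ 2 - (1 - α ^ 2) := by
      rw [hSdef, Real.sq_sqrt (by linarith), hr2]
    have h1x2 : 0 < 1 - x ^ 2 := by nlinarith
    have hd0 : HasDerivAt (fun y : ℝ => y ^ 2 - r ^ 2) (2 * x) x := by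
      simpa using (hasDerivAt_pow 2 x).sub_const (r ^ 2)
    have hdS : HasDerivAt (fun y : ℝ => Real.sqrt (y ^ 2 - r ^ 2)) (2 * x / (2 * S)) x :=
      hd0.sqrt (by linarith)
    have hd1 : HasDerivAt (fun y : ℝ => y * Real.log (α + Real.sqrt (y ^ 2 - r ^ 2)))
        (1 * Real.log (α + S) + x * (2 * x / (2 * S) / (α + S))) x :=
      (hasDerivAt_id x).mul ((hdS.const_add α).log (by positivity))
    have hd2 : HasDerivAt (fun y : ℝ => α * Real.log (y + Real.sqrt (y ^ 2 - r ^ 2)))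
        (α * ((1 + 2 * x / (2 * S)) / (x + S))) x :=
      (((hasDerivAt_id x).add hdS).log (by dsimp only [Pi.add_apply, id_eq]; positivity)).const_mul α
    have hd3 : HasDerivAt (fun y : ℝ => Real.log (α * y + Real.sqrt (y ^ 2 - r ^ 2)))
        ((α * 1 + 2 * x / (2 * S)) / (α * x + S)) x :=
      (((hasDerivAt_id x).const_mul α).add hdS).log (by dsimp only [Pi.add_apply, id_eq]; positivity)
    have hdu : HasDerivAt (fun y : ℝ => 1 - y ^ 2) (-(2 * x)) x := by
      simpa using (hasDerivAt_pow 2 x).const_sub 1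
    have hd4a : HasDerivAt (fun y : ℝ => (1 - y ^ 2) * Real.log (1 - y ^ 2))
        ((Real.log (1 - x ^ 2) + 1) * -(2 * x)) x :=
      by have := (Real.hasDerivAt_mul_log h1x2.ne').comp x hdu; exact this
    have hdv : HasDerivAt (fun y : ℝ => 2 * (1 + y)) (2 * 1) x :=
      ((hasDerivAt_id x).const_add 1).const_mul 2
    have hd4 : HasDerivAt (fun y : ℝ => (1 - y ^ 2) * Real.log (1 - y ^ 2) / (2 * (1 + y)))
        (((Real.log (1 - x ^ 2) + 1) * -(2 * x) * (2 * (1 + x))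
          - (1 - x ^ 2) * Real.log (1 - x ^ 2) * (2 * 1)) / (2 * (1 + x)) ^ 2) x :=
      hd4a.div hdv (by positivity)
    have htot := ((hd1.add hd2).sub hd3).add hd4
    rw [hG]
    refine htot.congr_deriv (Eq.symm ?_)
    exact cconst_alg α x S (Real.log (1 - x ^ 2)) (Real.log (α + S)) hα0 hSpos hx0 hx1
      (by positivity) (by positivity) (by positivity) hS2
  -- nonnegativity of the integrand on (r, 1)
  have hpos : ∀ x ∈ Ioo r 1,
      0 ≤ Real.log (α + Real.sqrt (x ^ 2 - r ^ 2)) - (1 / 2) * Real.log (1 - x ^ 2) := by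
    intro x hx
    obtain ⟨hxr, hx1⟩ := hx
    have hx0 : 0 < x := lt_trans hr0 hxr
    have hx2 : r ^ 2 < x ^ 2 := by nlinarith
    have hSpos : 0 < Real.sqrt (x ^ 2 - r ^ 2) := Real.sqrt_pos.mpr (by linarith)
    set S := Real.sqrt (x ^ 2 - r ^ 2) with hSdef
    have hS2 : S ^ 2 = x ^ 2 - (1 - α ^ 2) := by
      rw [hSdef, Real.sq_sqrt (by linarith), hr2]
    have h1x2 : 0 < 1 - x ^ 2 := by nlinarith
    have hle : 1 - x ^ 2 ≤ (α + S) ^ 2 := by nlinarith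
    have := Real.log_le_log h1x2 hle
    rw [Real.log_pow] at this
    push_cast at this
    linarith
  -- integrability
  have hint : IntervalIntegrable
      (fun x => Real.log (α + Real.sqrt (x ^ 2 - r ^ 2)) - (1 / 2) * Real.log (1 - x ^ 2))
      volume r 1 := by
    rw [intervalIntegrable_iff, uIoc_of_le hr1.le]
    exact integrableOn_deriv_of_nonneg hcont hderiv hpos
  have hFTC : (∫ x in r..1,
      (Real.log (α + Real.sqrt (x ^ 2 - r ^ 2)) - (1 / 2) * Real.log (1 - x ^ 2)))
        = G 1 - G r :=
    integral_eq_sub_of_hasDeriv_right_of_le hr1.le hcont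
      (fun x hx => (hderiv x hx).hasDerivWithinAt) hint
  -- values at the endpoints
  have hsq1 : Real.sqrt ((1:ℝ) ^ 2 - r ^ 2) = α := by
    rw [one_pow, hr2]
    rw [show (1:ℝ) - (1 - α ^ 2) = α ^ 2 by ring, Real.sqrt_sq hα0.le]
  have hG1 : G 1 = α * Real.log (1 + α) := by
    rw [hG]
    simp only [hsq1]
    norm_num [mul_comm]
  have hGr : G r = (α - 1) * Real.log r := by
    simp only [hG]
    have h0 : r ^ 2 - r ^ 2 = 0 := by ring
    rw [h0, Real.sqrt_zero]
    have h1 : (1:ℝ) - r ^ 2 = α ^ 2 := by rw [hr2]; ring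
    have h2 : (1:ℝ) - r ^ 2 = (1 - r) * (1 + r) := by ring
    rw [add_zero, add_zero, add_zero, Real.log_mul hα0.ne' hr0.ne', h1]
    rw [Real.log_pow]
    have h1r : (0:ℝ) < 1 + r := by linarith
    have ha2 : α ^ 2 = (1 - r) * (1 + r) := by linear_combination hr2
    rw [ha2]
    push_cast
    field_simp
    ring
  have hlogr : Real.log r = (Real.log (1 + α) + Real.log (1 - α)) / 2 := by
    rw [hr, Real.log_sqrt h1a2.le,
      show (1:ℝ) - α ^ 2 = (1 + α) * (1 - α) by ring,
      Real.log_mul (by linarith) (by linarith)]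
  rw [hFTC, hG1, hGr, hlogr, Cconst]
  ring
end
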